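/- Upper bound on the 0-stabilizer entropy of subset phase states: for any subset S ⊆ {0,1}^n and any function f: {0,1}^n → {0,1}, the subset phase state |ψ_{f,S}⟩ = |S|^{−1/2} Σ_{x∈S} (−1)^{f(x)} |x⟩ satisfies M₀(ψ_{f,S}) ≤ 2 log|S|, i.e., the number of Pauli operators P with tr(P ψ_{f,S}) ≠ 0 is at most |S|²·2^n. -/

import Mathlib

open scoped BigOperators
open ComplexConjugate
open scoped ComplexOrder

/-- The positive semidefinite square root of a positive semidefinite matrix, as
`Matrix.PosSemidef.sqrt` was defined in the older Mathlib (since removed). -/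
noncomputable def posSemidefSqrt {ι : Type*} [Fintype ι] [DecidableEq ι] {A : Matrix ι ι ℂ}
    (hA : A.PosSemidef) : Matrix ι ι ℂ :=
  hA.1.eigenvectorUnitary.1 * Matrix.diagonal ((↑) ∘ (√·) ∘ hA.1.eigenvalues) *
    (star hA.1.eigenvectorUnitary : Matrix ι ι ℂ)

noncomputable def traceNorm {ι : Type*} [Fintype ι] [DecidableEq ι] (A : Matrix ι ι ℂ) : ℝ :=
  ((posSemidefSqrt (Matrix.posSemidef_conjTranspose_mul_self A)).trace).re

noncomputable def proj {ι : Type*} (v : ι → ℂ) : Matrix ι ι ℂ :=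
  Matrix.of fun i j => v i * conj (v j)

noncomputable def tensorPow {ι : Type*} (A : Matrix ι ι ℂ) (t : ℕ) :
    Matrix (Fin t → ι) (Fin t → ι) ℂ :=
  Matrix.of fun x y => ∏ i, A (x i) (y i)

noncomputable def pauli {n : ℕ} (a b : Fin n → ZMod 2) :
    Matrix (Fin n → ZMod 2) (Fin n → ZMod 2) ℂ :=
  Matrix.of fun x y =>
    if x = y + a then
      Complex.I ^ (∑ i, (a i * b i).val) * (-1 : ℂ) ^ (∑ i, (b i * y i).val)
    else 0

noncomputable def xi {n : ℕ} (ρ : Matrix (Fin n → ZMod 2) (Fin n → ZMod 2) ℂ)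
    (p : (Fin n → ZMod 2) × (Fin n → ZMod 2)) : ℝ :=
  Complex.normSq ((pauli p.1 p.2 * ρ).trace) / 2 ^ n

/-- α-stabilizer Rényi entropy M_α(ψ) = S_α(Ξ_ψ) − log d, covering α = 0, α = 1 and
generic α via the classical Rényi entropy (base-2 logs). -/
noncomputable def MStab (α : ℝ) {n : ℕ}
    (ρ : Matrix (Fin n → ZMod 2) (Fin n → ZMod 2) ℂ) : ℝ :=
  (if α = 1 then
      - ∑ p : (Fin n → ZMod 2) × (Fin n → ZMod 2), xi ρ p * Real.logb 2 (xi ρ p)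
    else if α = 0 then
      Real.logb 2 (({p : (Fin n → ZMod 2) × (Fin n → ZMod 2) | xi ρ p ≠ 0}.ncard : ℝ))
    else
      (1 / (1 - α)) * Real.logb 2
        (∑ p : (Fin n → ZMod 2) × (Fin n → ZMod 2), xi ρ p ^ α)) - n


open scoped Pointwise

lemma eq_add_of_pauli_apply_ne_zero {n : ℕ} {a b x y : Fin n → ZMod 2}
    (h : pauli a b x y ≠ 0) : x = y + a := by
  by_contra hxy
  exact h (by simp [pauli, hxy])

lemma trace_pauli_mul_proj {n : ℕ} (a b : Fin n → ZMod 2) (v : (Fin n → ZMod 2) → ℂ) :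
    (pauli a b * proj v).trace = ∑ x, ∑ y, pauli a b x y * (v y * conj (v x)) := by
  simp [Matrix.trace, Matrix.mul_apply, proj]

/-- A Pauli operator `X^a Z^b` only connects `|y⟩` to `|y + a⟩`, so it has a nonzero expectation
in a state supported on `S` only if its `X`-part `a` is a difference of two elements of `S`. -/
lemma mem_sub_of_trace_pauli_mul_proj_ne_zero {n : ℕ} {S : Finset (Fin n → ZMod 2)}
    {v : (Fin n → ZMod 2) → ℂ} (hv : ∀ x ∉ S, v x = 0) {a b : Fin n → ZMod 2}
    (h : (pauli a b * proj v).trace ≠ 0) : a ∈ S - S := by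
  rw [trace_pauli_mul_proj] at h
  obtain ⟨x, -, hrow⟩ := Finset.exists_ne_zero_of_sum_ne_zero h
  obtain ⟨y, -, hxy⟩ := Finset.exists_ne_zero_of_sum_ne_zero hrow
  have hP : pauli a b x y ≠ 0 := left_ne_zero_of_mul hxy
  have hvy : v y ≠ 0 := left_ne_zero_of_mul (right_ne_zero_of_mul hxy)
  have hvx : conj (v x) ≠ 0 := right_ne_zero_of_mul (right_ne_zero_of_mul hxy)
  have hyS : y ∈ S := by_contra fun hy => hvy (hv y hy)
  have hxS : x ∈ S := by_contra fun hx => hvx (by simp [hv x hx])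
  rw [eq_add_of_pauli_apply_ne_zero hP] at hxS
  simpa using Finset.sub_mem_sub hxS hyS

lemma ncard_trace_pauli_mul_proj_ne_zero_le {n : ℕ} {S : Finset (Fin n → ZMod 2)}
    {v : (Fin n → ZMod 2) → ℂ} (hv : ∀ x ∉ S, v x = 0) :
    {p : (Fin n → ZMod 2) × (Fin n → ZMod 2) |
        (pauli p.1 p.2 * proj v).trace ≠ 0}.ncard ≤ S.card ^ 2 * 2 ^ n := by
  have hsub : {p : (Fin n → ZMod 2) × (Fin n → ZMod 2) |
      (pauli p.1 p.2 * proj v).trace ≠ 0} ⊆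
      ↑((S - S) ×ˢ (Finset.univ : Finset (Fin n → ZMod 2))) := by
    intro p hp
    exact Finset.mem_product.2
      ⟨mem_sub_of_trace_pauli_mul_proj_ne_zero hv hp, Finset.mem_univ _⟩
  calc _ ≤ ((S - S) ×ˢ (Finset.univ : Finset (Fin n → ZMod 2))).card :=
        Set.ncard_coe_finset _ ▸ Set.ncard_le_ncard hsub (Finset.finite_toSet _)
    _ = (S - S).card * 2 ^ n := by simp [ZMod.card]
    _ ≤ S.card ^ 2 * 2 ^ n := by
        rw [sq]
        exact Nat.mul_le_mul_right _ Finset.card_sub_le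

lemma MStab_zero_eq {n : ℕ} (ρ : Matrix (Fin n → ZMod 2) (Fin n → ZMod 2) ℂ) :
    MStab 0 ρ = Real.logb 2
      ({p : (Fin n → ZMod 2) × (Fin n → ZMod 2) | (pauli p.1 p.2 * ρ).trace ≠ 0}.ncard : ℝ)
      - n := by
  simp [MStab, xi]

lemma logb_sub_le_two_mul_logb_of_le {N s n : ℕ} (h : N ≤ s ^ 2 * 2 ^ n) :
    Real.logb 2 N - n ≤ 2 * Real.logb 2 s := by
  rcases Nat.eq_zero_or_pos s with rfl | hs
  · obtain rfl : N = 0 := by simpa using h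
    simp
  rcases Nat.eq_zero_or_pos N with rfl | hN
  · have : 0 ≤ Real.logb 2 s := Real.logb_nonneg one_lt_two (by exact_mod_cast hs)
    simp only [Nat.cast_zero, Real.logb_zero]
    linarith [(n.cast_nonneg : (0 : ℝ) ≤ n)]
  calc Real.logb 2 N - n ≤ Real.logb 2 ((s : ℝ) ^ 2 * 2 ^ n) - n :=
        sub_le_sub_right (Real.logb_le_logb_of_le one_lt_two (by exact_mod_cast hN)
          (by exact_mod_cast h)) _
    _ = 2 * Real.logb 2 s := by
        rw [Real.logb_mul (by positivity) (by positivity), Real.logb_pow, Real.logb_pow,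
          Real.logb_self_eq_one one_lt_two]
        ring

theorem M0_subset_phase_le_general {n : ℕ} (S : Finset (Fin n → ZMod 2))
    (f : (Fin n → ZMod 2) → ZMod 2) :
    let ψ : (Fin n → ZMod 2) → ℂ :=
      fun x => if x ∈ S then (-1 : ℂ) ^ (f x).val / (Real.sqrt S.card : ℂ) else 0
    {p : (Fin n → ZMod 2) × (Fin n → ZMod 2) |
        (pauli p.1 p.2 * proj ψ).trace ≠ 0}.ncard ≤ S.card ^ 2 * 2 ^ n ∧
    MStab 0 (proj ψ) ≤ 2 * Real.logb 2 (S.card : ℝ) := by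
  intro ψ
  have hψ : ∀ x ∉ S, ψ x = 0 := fun x hx => if_neg hx
  have hcard := ncard_trace_pauli_mul_proj_ne_zero_le hψ
  exact ⟨hcard, MStab_zero_eq (proj ψ) ▸ logb_sub_le_two_mul_logb_of_le hcard⟩

/-- upper bound on the 0-stabilizer entropy of subset phase states:
the number of Pauli operators with nonzero expectation is at most |S|²·2^n, and
M₀(ψ_{f,S}) ≤ 2 log|S|. -/
theorem M0_subset_phase_le {n : ℕ} (S : Finset (Fin n → ZMod 2)) (hS : S.Nonempty)
    (f : (Fin n → ZMod 2) → ZMod 2) :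
    let ψ : (Fin n → ZMod 2) → ℂ :=
      fun x => if x ∈ S then (-1 : ℂ) ^ (f x).val / (Real.sqrt S.card : ℂ) else 0
    {p : (Fin n → ZMod 2) × (Fin n → ZMod 2) |
        (pauli p.1 p.2 * proj ψ).trace ≠ 0}.ncard ≤ S.card ^ 2 * 2 ^ n ∧
    MStab 0 (proj ψ) ≤ 2 * Real.logb 2 (S.card : ℝ) :=
  M0_subset_phase_le_general S f
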